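/- Let G(α, β) = O₁ log(O₁/n₁) + O₂ log(O₂/n₂) with O₁ = 2(1+α), O₂ = 2(1−α), n₁ = (1+α) + sβ, n₂ = (1−α) − sβ, defined where n₁ > 0, n₂ > 0, and α ∈ (−1,1), s a real constant. Then ∂G/∂β = 4s²β/(n₁n₂) and ∂²G/∂β² = (4s²/(n₁n₂)²)(1 − α² + s²β²) ≥ 0. In particular, G(α,·) is convex in β, nondecreasing for β ≥ 0 and nonincreasing for β ≤ 0, and G(α,0) = 4 log 2 is constant. -/

import Mathlib

/-!
With `A = 1 + α` and `B = 1 - α`, each term `2A log (2A / (A + sβ))` has derivative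
`-2As / (A + sβ)`; since `A + B = 2` the two terms combine to `4s²β / (n₁ n₂)`, and
differentiating once more leaves the numerator `4s² (AB + s²β²)`, which is nonnegative because
`AB = 1 - α² ≥ 0`. Monotonicity for `β ≥ 0` is read off the sign of the first derivative, and the
case `β ≤ 0` reduces to it through the symmetry `G_{-s}(-β) = G_s(β)`.
-/

open Real Set

/-- The correction term `G` relating the population SBM log-likelihood to the DCSBM one,
in `(α, β)` coordinates, as a function of `β` for fixed `α` and constant `s`. -/
noncomputable def Gb (α s b : ℝ) : ℝ :=
  2 * (1 + α) * Real.log (2 * (1 + α) / ((1 + α) + s * b))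
    + 2 * (1 - α) * Real.log (2 * (1 - α) / ((1 - α) - s * b))

theorem HasDerivAt.const_mul_log_const_div {f : ℝ → ℝ} {f' x : ℝ} (c : ℝ)
    (hf : HasDerivAt f f' x) (hx : f x ≠ 0) :
    HasDerivAt (fun y => c * Real.log (c / f y)) (-(c * f') / f x) x := by
  rcases eq_or_ne c 0 with rfl | hc
  · simpa using hasDerivAt_const x (0 : ℝ)
  refine ((((hasDerivAt_const x c).fun_div hf hx).log (div_ne_zero hc hx)).const_mul c).congr_deriv
    ?_
  field_simp
  ring

theorem mul_log_mul_div_self (c : ℝ) : 2 * c * log (2 * c / c) = 2 * c * log 2 := by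
  rcases eq_or_ne c 0 with rfl | hc
  · simp
  · rw [mul_div_cancel_right₀ 2 hc]

def gbDomain (α s : ℝ) : Set ℝ := {b | 0 < (1 + α) + s * b ∧ 0 < (1 - α) - s * b}

noncomputable def gbDeriv (α s b : ℝ) : ℝ :=
  4 * s ^ 2 * b / (((1 + α) + s * b) * ((1 - α) - s * b))

noncomputable def gbDeriv2 (α s b : ℝ) : ℝ :=
  (4 * s ^ 2 / (((1 + α) + s * b) * ((1 - α) - s * b)) ^ 2) * (1 - α ^ 2 + s ^ 2 * b ^ 2)

variable {α s β : ℝ}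

theorem gbDomain_eq_preimage (α s : ℝ) :
    gbDomain α s = (s * ·) ⁻¹' Ioo (-(1 + α)) (1 - α) := by
  ext b
  simp only [gbDomain, mem_ofPred_eq, mem_preimage, mem_Ioo]
  constructor <;> rintro ⟨h₁, h₂⟩ <;> constructor <;> linarith

theorem convex_gbDomain (α s : ℝ) : Convex ℝ (gbDomain α s) := by
  rw [gbDomain_eq_preimage]
  exact (convex_Ioo _ _).is_linear_preimage (IsLinearMap.isLinearMap_smul s)

theorem neg_mem_gbDomain_neg : -β ∈ gbDomain α (-s) ↔ β ∈ gbDomain α s := by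
  simp only [gbDomain, mem_ofPred_eq, neg_mul_neg]

theorem Gb_neg_neg (α s b : ℝ) : Gb α (-s) (-b) = Gb α s b := by
  simp only [Gb, neg_mul_neg]

theorem Gb_zero (α s : ℝ) : Gb α s 0 = 4 * log 2 := by
  simp only [Gb, mul_zero, add_zero, sub_zero, mul_log_mul_div_self]
  ring

theorem hasDerivAt_Gb (hβ : β ∈ gbDomain α s) : HasDerivAt (Gb α s) (gbDeriv α s β) β := by
  have h₁ := hβ.1.ne'
  have h₂ := hβ.2.ne'
  refine ((((hasDerivAt_const_mul s).const_add (1 + α)).const_mul_log_const_div _ h₁).add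
    (((hasDerivAt_const_mul s).const_sub (1 - α)).const_mul_log_const_div _ h₂)).congr_deriv ?_
  unfold gbDeriv
  field_simp
  ring

theorem hasDerivAt_gbDeriv (hβ : β ∈ gbDomain α s) :
    HasDerivAt (gbDeriv α s) (gbDeriv2 α s β) β := by
  have hden : HasDerivAt (fun b => ((1 + α) + s * b) * ((1 - α) - s * b))
      (s * ((1 - α) - s * β) + ((1 + α) + s * β) * (-s)) β :=
    ((hasDerivAt_const_mul s).const_add (1 + α)).mul ((hasDerivAt_const_mul s).const_sub (1 - α))
  have h₁ := hβ.1.ne'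
  have h₂ := hβ.2.ne'
  refine ((hasDerivAt_const_mul (4 * s ^ 2)).fun_div hden (mul_ne_zero h₁ h₂)).congr_deriv ?_
  unfold gbDeriv2
  field_simp
  ring

theorem gbDeriv_nonneg (hβ : β ∈ gbDomain α s) (h₀ : 0 ≤ β) : 0 ≤ gbDeriv α s β := by
  have h₁ := hβ.1
  have h₂ := hβ.2
  unfold gbDeriv
  positivity

theorem gbDeriv2_nonneg (hα : α ∈ Ioo (-1) 1) (β : ℝ) : 0 ≤ gbDeriv2 α s β := by
  have : 0 ≤ 1 - α ^ 2 := by nlinarith [hα.1, hα.2]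
  unfold gbDeriv2
  positivity

theorem convexOn_Gb (hα : α ∈ Ioo (-1) 1) : ConvexOn ℝ (gbDomain α s) (Gb α s) :=
  convexOn_of_hasDerivWithinAt2_nonneg (convex_gbDomain α s)
    (fun _ hb => (hasDerivAt_Gb hb).continuousAt.continuousWithinAt)
    (fun _ hb => (hasDerivAt_Gb (interior_subset hb)).hasDerivWithinAt)
    (fun _ hb => (hasDerivAt_gbDeriv (interior_subset hb)).hasDerivWithinAt)
    (fun b _ => gbDeriv2_nonneg hα b)

theorem monotoneOn_Gb : MonotoneOn (Gb α s) (gbDomain α s ∩ Ici 0) :=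
  monotoneOn_of_hasDerivWithinAt_nonneg ((convex_gbDomain α s).inter (convex_Ici 0))
    (fun _ hb => (hasDerivAt_Gb hb.1).continuousAt.continuousWithinAt)
    (fun _ hb => (hasDerivAt_Gb (interior_subset hb).1).hasDerivWithinAt)
    (fun _ hb => gbDeriv_nonneg (interior_subset hb).1 (interior_subset hb).2)

theorem antitoneOn_Gb : AntitoneOn (Gb α s) (gbDomain α s ∩ Iic 0) := by
  rintro a ⟨ha, ha₀⟩ b ⟨hb, hb₀⟩ hab
  rw [← Gb_neg_neg α s a, ← Gb_neg_neg α s b]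
  exact monotoneOn_Gb ⟨neg_mem_gbDomain_neg.2 hb, mem_Ici.2 (neg_nonneg.2 hb₀)⟩
    ⟨neg_mem_gbDomain_neg.2 ha, mem_Ici.2 (neg_nonneg.2 ha₀)⟩ (neg_le_neg hab)

theorem stmt11 (α s : ℝ) (hα : α ∈ Set.Ioo (-1 : ℝ) 1) :
    (∀ β : ℝ, 0 < (1 + α) + s * β → 0 < (1 - α) - s * β →
      HasDerivAt (Gb α s) (4 * s ^ 2 * β / (((1 + α) + s * β) * ((1 - α) - s * β))) β ∧
      HasDerivAt (fun b => 4 * s ^ 2 * b / (((1 + α) + s * b) * ((1 - α) - s * b)))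
        ((4 * s ^ 2 / (((1 + α) + s * β) * ((1 - α) - s * β)) ^ 2)
          * (1 - α ^ 2 + s ^ 2 * β ^ 2)) β ∧
      0 ≤ (4 * s ^ 2 / (((1 + α) + s * β) * ((1 - α) - s * β)) ^ 2)
          * (1 - α ^ 2 + s ^ 2 * β ^ 2)) ∧
    ConvexOn ℝ {b : ℝ | 0 < (1 + α) + s * b ∧ 0 < (1 - α) - s * b} (Gb α s) ∧
    (∀ β₁ β₂ : ℝ, 0 ≤ β₁ → β₁ ≤ β₂ →
      0 < (1 + α) + s * β₁ → 0 < (1 - α) - s * β₁ →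
      0 < (1 + α) + s * β₂ → 0 < (1 - α) - s * β₂ → Gb α s β₁ ≤ Gb α s β₂) ∧
    (∀ β₁ β₂ : ℝ, β₁ ≤ β₂ → β₂ ≤ 0 →
      0 < (1 + α) + s * β₁ → 0 < (1 - α) - s * β₁ →
      0 < (1 + α) + s * β₂ → 0 < (1 - α) - s * β₂ → Gb α s β₂ ≤ Gb α s β₁) ∧
    Gb α s 0 = 4 * Real.log 2 :=
  ⟨fun β h₁ h₂ => ⟨hasDerivAt_Gb ⟨h₁, h₂⟩, hasDerivAt_gbDeriv ⟨h₁, h₂⟩, gbDeriv2_nonneg hα β⟩,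
    convexOn_Gb hα,
    fun _ _ h₀ h₁₂ h₁ h₁' h₂ h₂' => monotoneOn_Gb ⟨⟨h₁, h₁'⟩, h₀⟩ ⟨⟨h₂, h₂'⟩, h₀.trans h₁₂⟩ h₁₂,
    fun _ _ h₁₂ h₀ h₁ h₁' h₂ h₂' => antitoneOn_Gb ⟨⟨h₁, h₁'⟩, h₁₂.trans h₀⟩ ⟨⟨h₂, h₂'⟩, h₀⟩ h₁₂,
    Gb_zero α s⟩
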